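/- arXiv:2605.09451 — 3 statements merged into one kernel-verified Lean document; each statement's English description precedes it below -/
import Mathlib

section
/- Let S be a unital ring and n ≥ 2. Suppose 1 = v_1 + v_2 + ··· + v_{n-1} where each v_i is a central unit of S. Then there exist matrices A, B ∈ M_n(S) such that (AB - BA)^n = Id_n. -/
/-!
Put `u = (1, -v₁, …, -vₙ₋₁)`, so that `∑ u = 0`, and let `sₖ = u₀ + ⋯ + uₖ₋₁`. Then
`A = diag(s)` and the weighted cyclic shift `B` with `B (j+1) j = uⱼ⁻¹` satisfy
`(AB - BA) (j+1) j = (sⱼ₊₁ - sⱼ) uⱼ⁻¹ = 1` (centrality lets `sⱼ` pass `uⱼ⁻¹`), also at the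
wrap-around entry `j = n - 1` because `∑ u = 0`. So `AB - BA` is the cyclic permutation matrix,
whose `n`-th power is `1`.
-/

open Matrix Finset

namespace Matrix

variable {n α : Type*} [Fintype n] [DecidableEq n]

theorem circulant_single_one_pow [Semiring α] [AddGroup n] (a : n) (k : ℕ) :
    circulant (Pi.single a (1 : α)) ^ k = circulant (Pi.single (k • a) 1) := by
  induction k with
  | zero => simp
  | succ k ih =>
    rw [pow_succ, ih, circulant_mul, mulVec_single, MulOpposite.op_one, one_smul]
    ext i
    simp only [col_apply, circulant_apply, Pi.single_apply, succ_nsmul, sub_eq_iff_eq_add]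

theorem circulant_single_one_pow_card [Semiring α] [AddGroup n] (a : n) :
    circulant (Pi.single a (1 : α)) ^ Fintype.card n = 1 := by
  rw [circulant_single_one_pow, card_nsmul_eq_zero, circulant_single_one]

def weightedShift [Zero α] [Add n] (a : n) (w : n → α) : Matrix n n α :=
  of fun i j => if i = j + a then w j else 0

theorem commutator_diagonal_weightedShift_eq_circulant [Ring α] [AddCommGroup n] (a : n)
    (s w : n → α) (h : ∀ j, s (j + a) * w j - w j * s j = 1) :
    diagonal s * weightedShift a w - weightedShift a w * diagonal s =
      circulant (Pi.single a 1) := by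
  ext i j
  simp only [weightedShift, sub_apply, diagonal_mul, mul_diagonal, of_apply, circulant_apply,
    Pi.single_apply, sub_eq_iff_eq_add']
  split_ifs with hij
  · rw [hij, ← h j, add_sub_cancel]
  · rw [mul_zero, zero_mul, add_zero]

end Matrix

theorem Fin.sum_Iio_add_one_sub {n : ℕ} [NeZero n] {M : Type*} [AddCommGroup M] (u : Fin n → M)
    (hu : ∑ i, u i = 0) (j : Fin n) :
    ∑ i ∈ Iio (j + 1), u i - ∑ i ∈ Iio j, u i = u j := by
  by_cases hj : (j : ℕ) + 1 < n
  · rw [Fin.Iio_add_one_eq_Iic hj, Iic_eq_cons_Iio, Finset.sum_cons, add_sub_cancel_right]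
  · have hlast : j + 1 = 0 := by
      ext; simp [Fin.val_add, show (j : ℕ) + 1 = n by omega]
    have huniv : Iic j = univ := by
      ext i; simp only [mem_Iic, mem_univ, iff_true, Fin.le_def]; omega
    have htotal := hu
    rw [← huniv, Iic_eq_cons_Iio, Finset.sum_cons] at htotal
    rw [hlast, ← bot_eq_zero, Iio_bot, sum_empty, zero_sub]
    exact neg_eq_of_add_eq_zero_left htotal

theorem exists_commutator_eq_circulant {S : Type*} [Ring S] {n : ℕ} [NeZero n] (u : Fin n → S)
    (hunit : ∀ i, IsUnit (u i)) (hcenter : ∀ i, u i ∈ Set.center S) (hsum : ∑ i, u i = 0) :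
    ∃ A B : Matrix (Fin n) (Fin n) S, A * B - B * A = circulant (Pi.single 1 1) := by
  set s : Fin n → S := fun i => ∑ j ∈ Iio i, u j
  refine ⟨diagonal s, weightedShift 1 (fun j => Ring.inverse (u j)),
    commutator_diagonal_weightedShift_eq_circulant _ _ _ fun j => ?_⟩
  have hs : s j ∈ Set.center S := (Subsemiring.center S).sum_mem fun i _ => hcenter i
  rw [← (Set.mem_center_iff.mp hs).comm _ |>.eq, ← sub_mul, Fin.sum_Iio_add_one_sub u hsum,
    Ring.mul_inverse_cancel _ (hunit j)]

theorem stmt_7_general (S : Type*) [Ring S] (n : ℕ)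
    (v : Fin (n - 1) → S) (hvc : ∀ i, v i ∈ Set.center S) (hvu : ∀ i, IsUnit (v i))
    (hsum : ∑ i, v i = 1) :
    ∃ A B : Matrix (Fin n) (Fin n) S, (A * B - B * A) ^ n = 1 := by
  rcases n with _ | m
  · exact ⟨0, 0, pow_zero _⟩
  obtain ⟨A, B, hAB⟩ := exists_commutator_eq_circulant (Fin.cons 1 (-v) : Fin (m + 1) → S)
    (Fin.cases isUnit_one fun i => (hvu i).neg)
    (Fin.cases Set.one_mem_center fun i => Set.neg_mem_center (hvc i))
    (by rw [Fin.sum_cons, Pi.neg_def, sum_neg_distrib]; exact add_neg_eq_zero.mpr hsum.symm)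
  refine ⟨A, B, hAB ▸ ?_⟩
  simpa using circulant_single_one_pow_card (α := S) (1 : Fin (m + 1))

theorem stmt_7 (S : Type*) [Ring S] (n : ℕ) (hn : 2 ≤ n)
    (v : Fin (n - 1) → S) (hvc : ∀ i, v i ∈ Set.center S) (hvu : ∀ i, IsUnit (v i))
    (hsum : ∑ i, v i = 1) :
    ∃ A B : Matrix (Fin n) (Fin n) S, (A * B - B * A) ^ n = 1 :=
  stmt_7_general S n v hvc hvu hsum
end

section
/- Let S be a unital ring of characteristic dividing n - 2 (i.e., (n-2)·1_S = 0), where n ≥ 2. Then there exist A, B ∈ M_n(S) with (AB - BA)^n = Id_n. -/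
/-!
Take `A = diag(0, 1, …, n-1)` and `B = diag(e) P`, where `P` is the permutation matrix of the
cyclic shift `σ : i ↦ i + 1` and `e i = i - σ i`. Since `P diag(d) = diag(d ∘ σ) P` and all entries
involved are integers, `AB - BA = diag(e i ^ 2) P`. Now `e i = -1` except at `i = n - 1`, where
`e i = n - 1 = 1` because `n - 2 = 0` in `S`. Hence `AB - BA = P`, and `P ^ n = 1` since `σ` is an
`n`-cycle.
-/

open Matrix

namespace Matrix

variable {ι R : Type*} [Fintype ι] [DecidableEq ι]

theorem permMatrix_mul_diagonal [NonAssocSemiring R] (σ : Equiv.Perm ι) (d : ι → R) :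
    σ.permMatrix R * diagonal d = diagonal (d ∘ σ) * σ.permMatrix R := by
  ext i j
  simp only [mul_diagonal, diagonal_mul, Function.comp_apply, PEquiv.toMatrix_apply,
    Equiv.toPEquiv_apply, Option.mem_def, Option.some.injEq]
  split_ifs with h <;> simp [h]

theorem permMatrix_pow [Semiring R] (σ : Equiv.Perm ι) (k : ℕ) :
    σ.permMatrix R ^ k = (σ ^ k).permMatrix R := by
  induction k with
  | zero => simp
  | succ k ih => rw [pow_succ, ih, ← permMatrix_mul, ← pow_succ']

theorem diagonal_commutator_diagonal_mul_permMatrix [Ring R] (σ : Equiv.Perm ι) (d e : ι → R) :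
    diagonal d * (diagonal e * σ.permMatrix R) - diagonal e * σ.permMatrix R * diagonal d
      = diagonal (fun i => d i * e i - e i * d (σ i)) * σ.permMatrix R := by
  rw [mul_assoc, permMatrix_mul_diagonal, ← mul_assoc, ← mul_assoc, diagonal_mul_diagonal,
    diagonal_mul_diagonal, ← sub_mul, diagonal_sub]
  rfl

end Matrix

theorem finRotate_pow_self (n : ℕ) : finRotate n ^ n = 1 := by
  rcases n with _ | _ | m
  · rfl
  · rw [zero_add, pow_one, finRotate_one]; rfl
  · have h := isCycle_finRotate (n := m).orderOf
    rw [support_finRotate, Finset.card_univ, Fintype.card_fin] at h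
    simpa [h] using pow_orderOf_eq_one (finRotate (m + 2))

theorem natCast_val_sub_val_finRotate {S : Type*} [Ring S] {k : ℕ} (i : Fin (k + 1)) :
    ((i : ℕ) : S) - ((finRotate (k + 1) i : ℕ) : S) = if i = Fin.last k then (k : S) else -1 := by
  rw [coe_finRotate]
  split_ifs with h
  · simp [h]
  · push_cast
    abel

theorem stmt_11 (S : Type*) [Ring S] (n : ℕ) (hn : 2 ≤ n)
    (hchar : ((n - 2 : ℕ) : S) = 0) :
    ∃ A B : Matrix (Fin n) (Fin n) S, (A * B - B * A) ^ n = 1 := by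
  obtain ⟨k, rfl⟩ : ∃ k, n = k + 1 := ⟨n - 1, by omega⟩
  have hk : (k : S) = 1 := by
    obtain ⟨j, rfl⟩ : ∃ j, k = j + 1 := ⟨k - 1, by omega⟩
    simpa using hchar
  let σ := finRotate (k + 1)
  let d : Fin (k + 1) → S := fun i => ((i : ℕ) : S)
  let e : Fin (k + 1) → S := fun i => d i - d (σ i)
  have he : ∀ i, d i * e i - e i * d (σ i) = 1 := by
    intro i
    have hcomm : Commute (e i) (d (σ i)) := (Nat.cast_commute _ _).sub_left (Nat.cast_commute _ _)
    rw [hcomm.eq, ← sub_mul]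
    show e i * e i = 1
    simp only [e, d, σ, natCast_val_sub_val_finRotate]
    split_ifs <;> simp [hk]
  refine ⟨diagonal d, diagonal e * σ.permMatrix S, ?_⟩
  rw [diagonal_commutator_diagonal_mul_permMatrix, funext he, diagonal_one,
    one_mul, permMatrix_pow, finRotate_pow_self, permMatrix_one]
end

section
/- Let R be a unital ring with n invertible, ω a central unit with ω^n = 1 and ω^i - ω^j a unit for all 0 ≤ i ≠ j ≤ n-1, and u ∈ R with u^n = 1. Let e_0, ..., e_{n-1} be the spectral idempotents e_k = (1/n) ∑_j ω^{-kj} u^j. If the idempotents e_0, ..., e_{n-1} are cyclically equivalent, then there exists a unit v ∈ R with v u v^{-1} = ω^{-1} u. -/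
/-- Idempotents `e 0, …, e (n-1)` (indices mod `n`) are cyclically equivalent if for each
`i < n` there are `x ∈ e_i R e_{i+1}` and `y ∈ e_{i+1} R e_i` with `x*y = e_i`,
`y*x = e_{i+1}`. -/
def CyclicallyEquivalent {R : Type*} [Ring R] (n : ℕ) (e : ℕ → R) : Prop :=
  ∀ i < n, ∃ x y : R,
    (∃ r, x = e i * r * e ((i + 1) % n)) ∧
    (∃ r, y = e ((i + 1) % n) * r * e i) ∧
    x * y = e i ∧ y * x = e ((i + 1) % n)

/-!
With `ζ = ω⁻¹`, the spectral idempotents are `e k = n⁻¹ ∑ⱼ (ζ ^ k * u) ^ j`. They are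
eigenvectors, `u * e k = ω ^ k * e k`, so `e k * e l` is `n⁻¹` times the geometric sum
`∑ⱼ (ζ ^ k * ω ^ l) ^ j` applied to `e l`, which vanishes for `k ≠ l` because
`ζ ^ k * ω ^ l - 1 = ζ ^ k * (ω ^ l - ω ^ k)` is a unit. Swapping the two sums, `∑ₖ e k = 1`
since `∑ₖ (ζ ^ j) ^ k` vanishes for `0 < j < n`; hence `u = ∑ₖ ω ^ k * e k`. For a complete
orthogonal family, an equivalence `xᵢ, yᵢ` between `eᵢ` and `eᵢ₊₁` (indices mod `n`) makes
`v = ∑ yᵢ` a unit with inverse `∑ xᵢ` and `v * eᵢ * v⁻¹ = eᵢ₊₁`, so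
`v * u * v⁻¹ = ∑ ω ^ i * eᵢ₊₁ = ζ * u`.
-/

open Finset

theorem Ring.inverse_mem_center {M₀ : Type*} [MonoidWithZero M₀] {a : M₀}
    (ha : a ∈ Set.center M₀) : Ring.inverse a ∈ Set.center M₀ := by
  by_cases hu : IsUnit a
  · rw [← hu.unit_spec, Ring.inverse_unit]
    exact Set.units_inv_mem_center (by rwa [hu.unit_spec])
  · rw [Ring.inverse_non_unit a hu]
    exact Set.zero_mem_center

theorem Fin.val_finRotate {n : ℕ} (i : Fin n) : (finRotate n i : ℕ) = (i + 1) % n := by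
  rcases n with _ | n
  · exact i.elim0
  · rw [finRotate_apply, Fin.val_add, Fin.val_one']
    simp

theorem Commute.geom_sum_mul_eq_of_mul_eq {R : Type*} [Semiring R] {a b x : R} {n : ℕ}
    (hab : Commute a b) (h : a * x = b * x) :
    (∑ i ∈ range n, a ^ i) * x = (∑ i ∈ range n, b ^ i) * x := by
  have hpow : ∀ j : ℕ, a ^ j * x = b ^ j * x := by
    intro j
    induction j with
    | zero => simp
    | succ j ih => rw [pow_succ, mul_assoc, h, ← mul_assoc, (hab.pow_left j).eq, mul_assoc,
        ih, ← mul_assoc, ← pow_succ']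
  simp only [sum_mul, hpow]

section GeomSum

variable {R : Type*} [Ring R] {a : R} {n : ℕ}

theorem mul_geom_sum_of_pow_eq_one (ha : a ^ n = 1) :
    a * ∑ i ∈ range n, a ^ i = ∑ i ∈ range n, a ^ i := by
  have h := mul_geom_sum a n
  rwa [ha, sub_self, sub_mul, one_mul, sub_eq_zero] at h

theorem geom_sum_eq_zero_of_pow_eq_one (ha : a ^ n = 1) (h : IsUnit (a - 1)) :
    ∑ i ∈ range n, a ^ i = 0 := by
  have h' := mul_geom_sum a n
  rwa [ha, sub_self, h.mul_right_eq_zero] at h'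

end GeomSum

section Conjugacy

variable {R : Type*} [Semiring R] {I : Type*} [Fintype I] {e f x y : I → R}

theorem OrthogonalIdempotents.sum_mul_eq (he : OrthogonalIdempotents e)
    (hy : ∀ i, ∃ r, y i = r * e i) (k : I) : (∑ i, y i) * e k = y k := by
  classical
  rw [sum_mul, sum_eq_single k]
  · obtain ⟨r, hr⟩ := hy k
    rw [hr, mul_assoc, (he.idem k).eq]
  · intro i _ hik
    obtain ⟨r, hr⟩ := hy i
    rw [hr, mul_assoc, he.ortho hik, mul_zero]
  · exact fun h => absurd (mem_univ k) h

theorem OrthogonalIdempotents.mul_sum_eq (he : OrthogonalIdempotents e)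
    (hx : ∀ i, ∃ r, x i = e i * r) (k : I) : e k * ∑ i, x i = x k := by
  classical
  rw [mul_sum, sum_eq_single k]
  · obtain ⟨r, hr⟩ := hx k
    rw [hr, ← mul_assoc, (he.idem k).eq]
  · intro i _ hik
    obtain ⟨r, hr⟩ := hx i
    rw [hr, ← mul_assoc, he.ortho (Ne.symm hik), zero_mul]
  · exact fun h => absurd (mem_univ k) h

theorem OrthogonalIdempotents.sum_mul_mul_sum_eq (he : OrthogonalIdempotents e)
    (hx : ∀ i, ∃ r, x i = e i * r * f i) (hy : ∀ i, ∃ r, y i = f i * r * e i)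
    (hyx : ∀ i, y i * x i = f i) (k : I) : (∑ i, y i) * e k * ∑ i, x i = f k := by
  have hye := he.sum_mul_eq (y := y) fun i => let ⟨r, hr⟩ := hy i; ⟨f i * r, hr⟩
  have hex := he.mul_sum_eq (x := x) fun i =>
    let ⟨r, hr⟩ := hx i; ⟨r * f i, by rw [hr, mul_assoc]⟩
  rw [← (he.idem k).eq, ← mul_assoc, hye, mul_assoc, hex, hyx]

theorem CompleteOrthogonalIdempotents.sum_mul_sum_eq_one (he : CompleteOrthogonalIdempotents e)
    (hf : ∑ i, f i = 1) (hx : ∀ i, ∃ r, x i = e i * r * f i)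
    (hy : ∀ i, ∃ r, y i = f i * r * e i) (hyx : ∀ i, y i * x i = f i) :
    (∑ i, y i) * ∑ i, x i = 1 := by
  calc (∑ i, y i) * ∑ i, x i = (∑ i, y i) * (∑ k, e k) * ∑ i, x i := by
        rw [he.complete, mul_one]
    _ = ∑ k, (∑ i, y i) * e k * ∑ i, x i := by rw [mul_sum _ _ (∑ i, y i), sum_mul]
    _ = 1 := by simp only [he.sum_mul_mul_sum_eq hx hy hyx, hf]

theorem CompleteOrthogonalIdempotents.exists_conj_eq (he : CompleteOrthogonalIdempotents e)
    (hf : CompleteOrthogonalIdempotents f) (hx : ∀ i, ∃ r, x i = e i * r * f i)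
    (hy : ∀ i, ∃ r, y i = f i * r * e i) (hxy : ∀ i, x i * y i = e i)
    (hyx : ∀ i, y i * x i = f i) : ∃ v : Rˣ, ∀ i, v * e i * ↑v⁻¹ = f i :=
  ⟨⟨∑ i, y i, ∑ i, x i, he.sum_mul_sum_eq_one hf.complete hx hy hyx,
    hf.sum_mul_sum_eq_one he.complete hy hx hxy⟩, he.sum_mul_mul_sum_eq hx hy hyx⟩

end Conjugacy

section Spectral

variable {R : Type*} [Ring R] {n : ℕ} {ω ζ u : R}

noncomputable def spectralIdempotent (n : ℕ) (ζ u : R) (k : ℕ) : R :=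
  Ring.inverse (n : R) * ∑ j ∈ range n, ζ ^ (k * j) * u ^ j

theorem spectralIdempotent_eq_geom_sum (hζ : ζ ∈ Set.center R) (k : ℕ) :
    spectralIdempotent n ζ u k = Ring.inverse (n : R) * ∑ j ∈ range n, (ζ ^ k * u) ^ j := by
  simp only [spectralIdempotent, ((hζ.comm u).pow_left k).mul_pow, pow_mul]

theorem isUnit_pow_mul_pow_sub_one (hω : ω ∈ Set.center R) (hζω : ζ * ω = 1)
    (hdiff : ∀ i j, i < n → j < n → i ≠ j → IsUnit (ω ^ i - ω ^ j)) {k l : ℕ} (hk : k < n)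
    (hl : l < n) (hkl : k ≠ l) : IsUnit (ζ ^ k * ω ^ l - 1) := by
  have hζk : ζ ^ k * ω ^ k = 1 := by rw [← (hω.comm ζ).symm.mul_pow, hζω, one_pow]
  have hζu : IsUnit ζ := ⟨⟨ζ, ω, hζω, (hω.comm ζ).eq ▸ hζω⟩, rfl⟩
  rw [← hζk, ← mul_sub]
  exact (hζu.pow k).mul (hdiff l k hl hk (Ne.symm hkl))

theorem mul_spectralIdempotent (hω : ω ∈ Set.center R) (hζ : ζ ∈ Set.center R)
    (hζω : ζ * ω = 1) (hζn : ζ ^ n = 1) (hu : u ^ n = 1) (k : ℕ) :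
    u * spectralIdempotent n ζ u k = ω ^ k * spectralIdempotent n ζ u k := by
  have hpow : (ζ ^ k * u) ^ n = 1 := by
    rw [((hζ.comm u).pow_left k).mul_pow, pow_right_comm, hζn, one_pow, hu, one_mul]
  have hu' : u = ω ^ k * (ζ ^ k * u) := by
    rw [← mul_assoc, ← (hω.comm ζ).mul_pow, (hω.comm ζ).eq, hζω, one_pow, one_mul]
  have hS : u * ∑ j ∈ range n, (ζ ^ k * u) ^ j = ω ^ k * ∑ j ∈ range n, (ζ ^ k * u) ^ j := by
    calc u * ∑ j ∈ range n, (ζ ^ k * u) ^ j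
        = ω ^ k * ((ζ ^ k * u) * ∑ j ∈ range n, (ζ ^ k * u) ^ j) := by rw [← mul_assoc, ← hu']
      _ = ω ^ k * ∑ j ∈ range n, (ζ ^ k * u) ^ j := by rw [mul_geom_sum_of_pow_eq_one hpow]
  have hν := Ring.inverse_mem_center (Set.natCast_mem_center R n)
  rw [spectralIdempotent_eq_geom_sum hζ, ← mul_assoc, ← (hν.comm u).eq, mul_assoc, hS,
    ← mul_assoc, (hν.comm _).eq, mul_assoc]

theorem spectralIdempotent_mul_spectralIdempotent_of_ne (hω : ω ∈ Set.center R)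
    (hζ : ζ ∈ Set.center R) (hζω : ζ * ω = 1) (hωn : ω ^ n = 1) (hζn : ζ ^ n = 1)
    (hu : u ^ n = 1) (hdiff : ∀ i j, i < n → j < n → i ≠ j → IsUnit (ω ^ i - ω ^ j))
    {k l : ℕ} (hk : k < n) (hl : l < n) (hkl : k ≠ l) :
    spectralIdempotent n ζ u k * spectralIdempotent n ζ u l = 0 := by
  have hcomm : Commute (ζ ^ k * u) (ζ ^ k * ω ^ l) :=
    ((hζ.comm _).pow_left k).symm.mul_right ((hω.comm _).pow_left l).symm
  have heigen : (ζ ^ k * u) * spectralIdempotent n ζ u l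
      = (ζ ^ k * ω ^ l) * spectralIdempotent n ζ u l := by
    rw [mul_assoc, mul_spectralIdempotent hω hζ hζω hζn hu, mul_assoc]
  have hpow : (ζ ^ k * ω ^ l) ^ n = 1 := by
    rw [((hζ.comm _).pow_left k).mul_pow, pow_right_comm, hζn, pow_right_comm, hωn, one_pow,
      one_pow, one_mul]
  rw [spectralIdempotent_eq_geom_sum hζ k, mul_assoc, hcomm.geom_sum_mul_eq_of_mul_eq heigen,
    geom_sum_eq_zero_of_pow_eq_one hpow (isUnit_pow_mul_pow_sub_one hω hζω hdiff hk hl hkl),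
    zero_mul, mul_zero]

theorem sum_spectralIdempotent (hninv : IsUnit (n : R)) (hω : ω ∈ Set.center R)
    (hζω : ζ * ω = 1) (hζn : ζ ^ n = 1)
    (hdiff : ∀ i j, i < n → j < n → i ≠ j → IsUnit (ω ^ i - ω ^ j)) :
    ∑ k ∈ range n, spectralIdempotent n ζ u k = 1 := by
  have hvanish : ∀ j ∈ range n, j ≠ 0 → (∑ k ∈ range n, (ζ ^ j) ^ k) * u ^ j = 0 := by
    intro j hj hj0
    have hunit := isUnit_pow_mul_pow_sub_one hω hζω hdiff (mem_range.mp hj)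
      (Nat.zero_lt_of_lt (mem_range.mp hj)) hj0
    rw [pow_zero, mul_one] at hunit
    rw [geom_sum_eq_zero_of_pow_eq_one (by rw [pow_right_comm, hζn, one_pow]) hunit, zero_mul]
  calc ∑ k ∈ range n, spectralIdempotent n ζ u k
      = Ring.inverse (n : R) * ∑ j ∈ range n, (∑ k ∈ range n, (ζ ^ j) ^ k) * u ^ j := by
        simp only [spectralIdempotent, ← mul_sum, sum_mul]
        rw [sum_comm]
        simp only [← pow_mul, Nat.mul_comm]
    _ = Ring.inverse (n : R) * n := by
        rw [sum_eq_single 0 hvanish (by simp +contextual)]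
        simp
    _ = 1 := Ring.inverse_mul_cancel _ hninv

theorem completeOrthogonalIdempotents_spectralIdempotent (hninv : IsUnit (n : R))
    (hω : ω ∈ Set.center R) (hζ : ζ ∈ Set.center R) (hζω : ζ * ω = 1) (hωn : ω ^ n = 1)
    (hζn : ζ ^ n = 1) (hu : u ^ n = 1)
    (hdiff : ∀ i j, i < n → j < n → i ≠ j → IsUnit (ω ^ i - ω ^ j)) :
    CompleteOrthogonalIdempotents fun k : Fin n => spectralIdempotent n ζ u k := by
  refine CompleteOrthogonalIdempotents.iff_ortho_complete.mpr ⟨fun k l hkl => ?_, ?_⟩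
  · exact spectralIdempotent_mul_spectralIdempotent_of_ne hω hζ hζω hωn hζn hu hdiff k.isLt
      l.isLt (Fin.val_ne_of_ne hkl)
  · rw [Fin.sum_univ_eq_sum_range (spectralIdempotent n ζ u)]
    exact sum_spectralIdempotent hninv hω hζω hζn hdiff

theorem sum_pow_mul_spectralIdempotent (hninv : IsUnit (n : R)) (hω : ω ∈ Set.center R)
    (hζ : ζ ∈ Set.center R) (hζω : ζ * ω = 1) (hζn : ζ ^ n = 1) (hu : u ^ n = 1)
    (hdiff : ∀ i j, i < n → j < n → i ≠ j → IsUnit (ω ^ i - ω ^ j)) :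
    ∑ k : Fin n, ω ^ (k : ℕ) * spectralIdempotent n ζ u k = u := by
  rw [Fin.sum_univ_eq_sum_range (fun k => ω ^ k * spectralIdempotent n ζ u k)]
  calc ∑ k ∈ range n, ω ^ k * spectralIdempotent n ζ u k
      = u * ∑ k ∈ range n, spectralIdempotent n ζ u k := by
        simp only [mul_sum, mul_spectralIdempotent hω hζ hζω hζn hu]
    _ = u := by rw [sum_spectralIdempotent hninv hω hζω hζn hdiff, mul_one]

end Spectral

theorem CyclicallyEquivalent.exists_finRotate {R : Type*} [Ring R] {n : ℕ} {e : ℕ → R}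
    (h : CyclicallyEquivalent n e) (i : Fin n) :
    ∃ x y : R, (∃ r, x = e i * r * e (finRotate n i)) ∧ (∃ r, y = e (finRotate n i) * r * e i) ∧
      x * y = e i ∧ y * x = e (finRotate n i) := by
  rw [Fin.val_finRotate]
  exact h i i.isLt

theorem conj_sum_pow_mul_eq_of_conj_eq_finRotate {R : Type*} [Semiring R] {n : ℕ} {ω ζ : R}
    (hω : ω ∈ Set.center R) (hζω : ζ * ω = 1) (hωn : ω ^ n = 1) {e : Fin n → R} (v : Rˣ)
    (hv : ∀ i, v * e i * ↑v⁻¹ = e (finRotate n i)) :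
    v * (∑ i : Fin n, ω ^ (i : ℕ) * e i) * ↑v⁻¹ = ζ * ∑ i : Fin n, ω ^ (i : ℕ) * e i := by
  have hshift : ∀ i : Fin n, ζ * ω ^ (finRotate n i : ℕ) = ω ^ (i : ℕ) := fun i => by
    rw [Fin.val_finRotate, ← pow_eq_pow_mod _ hωn, pow_succ', ← mul_assoc, hζω, one_mul]
  calc (v : R) * (∑ i : Fin n, ω ^ (i : ℕ) * e i) * ↑v⁻¹
      = ∑ i : Fin n, ω ^ (i : ℕ) * e (finRotate n i) := by
        rw [mul_sum, sum_mul]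
        refine sum_congr rfl fun i _ => ?_
        rw [← hv, ← mul_assoc, ← ((hω.comm _).pow_left _).eq]
        simp only [mul_assoc]
    _ = ∑ i : Fin n, ζ * (ω ^ (finRotate n i : ℕ) * e (finRotate n i)) := by
        simp only [← mul_assoc, hshift]
    _ = ζ * ∑ i : Fin n, ω ^ (i : ℕ) * e i := by
        rw [Equiv.sum_comp (finRotate n) (fun i => ζ * (ω ^ (i : ℕ) * e i)), mul_sum]

theorem stmt_13_general (R : Type*) [Ring R] (n : ℕ) (hninv : IsUnit (n : R))
    (ω : R) (hωc : ω ∈ Set.center R) (hωu : IsUnit ω) (hωn : ω ^ n = 1)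
    (hdiff : ∀ i j, i < n → j < n → i ≠ j → IsUnit (ω ^ i - ω ^ j))
    (u : R) (hu : u ^ n = 1)
    (e : ℕ → R)
    (he : ∀ k, e k =
      Ring.inverse (n : R) * ∑ j ∈ Finset.range n, (Ring.inverse ω) ^ (k * j) * u ^ j)
    (hce : CyclicallyEquivalent n e) :
    ∃ v : Rˣ, (v : R) * u * (↑v⁻¹ : R) = Ring.inverse ω * u := by
  have hζ : Ring.inverse ω ∈ Set.center R := Ring.inverse_mem_center hωc
  have hζω : Ring.inverse ω * ω = 1 := Ring.inverse_mul_cancel ω hωu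
  have hζn : Ring.inverse ω ^ n = 1 := by
    calc Ring.inverse ω ^ n = Ring.inverse ω ^ n * ω ^ n := by rw [hωn, mul_one]
      _ = 1 := by rw [← (hωc.comm _).symm.mul_pow, hζω, one_pow]
  obtain rfl : e = spectralIdempotent n (Ring.inverse ω) u := funext he
  have hE := completeOrthogonalIdempotents_spectralIdempotent hninv hωc hζ hζω hωn hζn hu hdiff
  have hErot := (CompleteOrthogonalIdempotents.equiv (finRotate n)).mpr hE
  choose x y hx hy hxy hyx using hce.exists_finRotate
  obtain ⟨v, hv⟩ := hE.exists_conj_eq hErot hx hy hxy hyx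
  refine ⟨v, ?_⟩
  rw [← sum_pow_mul_spectralIdempotent hninv hωc hζ hζω hζn hu hdiff]
  exact conj_sum_pow_mul_eq_of_conj_eq_finRotate hωc hζω hωn v hv

theorem stmt_13 (R : Type*) [Ring R] (n : ℕ) (hn : 2 ≤ n) (hninv : IsUnit (n : R))
    (ω : R) (hωc : ω ∈ Set.center R) (hωu : IsUnit ω) (hωn : ω ^ n = 1)
    (hdiff : ∀ i j, i < n → j < n → i ≠ j → IsUnit (ω ^ i - ω ^ j))
    (u : R) (hu : u ^ n = 1)
    (e : ℕ → R)
    (he : ∀ k, e k =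
      Ring.inverse (n : R) * ∑ j ∈ Finset.range n, (Ring.inverse ω) ^ (k * j) * u ^ j)
    (hce : CyclicallyEquivalent n e) :
    ∃ v : Rˣ, (v : R) * u * (↑v⁻¹ : R) = Ring.inverse ω * u :=
  stmt_13_general R n hninv ω hωc hωu hωn hdiff u hu e he hce
end
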